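/- arXiv:1809.04438 — 3 statements merged into one kernel-verified Lean document; each statement's English description precedes it below -/
import Mathlib

section
/- For all α₁ > 0 and α₂ > 0 there exists a constant C = C(α₁, α₂) > 0, depending only on α₁ and α₂ (in particular independent of Δt and m), such that for every Δt > 0 and every integer m ≥ 1, Δt · Σ_{j=1}^{m} t_{m−j+1}^{−1+α₁} · t_j^{−1+α₂} ≤ C · t_m^{−1+α₁+α₂}. -/
/-!
Both factors are bounded on the half of the range where their argument is at least `t_m / 2`:
there `t^(α - 1) ≲ t_m^(α - 1)`. Since `(m - j + 1) + j = m + 1`, every term lies in one of the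
two halves, so the sum is at most `t_m^(α₁ - 1) ∑ t_j^(α₂ - 1) + t_m^(α₂ - 1) ∑ t_j^(α₁ - 1)`,
and `Δt ∑_{j ≤ m} t_j^(β - 1) ≲ t_m^β / β` is a Riemann-sum bound: for `β ≤ 1` each term is
dominated by the increment `(t_j^β - t_{j-1}^β) / β` of the concave map `t ↦ t^β`, and the sum
telescopes.
-/

open Real Finset

namespace DiscreteConvolution

lemma mul_rpow_sub_one_le_rpow_sub_rpow {β x : ℝ} (hβ₀ : 0 ≤ β) (hβ₁ : β ≤ 1) (hx : 1 ≤ x) :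
    β * x ^ (β - 1) ≤ x ^ β - (x - 1) ^ β := by
  have hx₀ : 0 < x := by linarith
  have hinv : x⁻¹ ≤ 1 := inv_le_one_of_one_le₀ hx
  have hbern : (1 + -x⁻¹) ^ β ≤ 1 + β * -x⁻¹ :=
    rpow_one_add_le_one_add_mul_self (by linarith) hβ₀ hβ₁
  have hfactor : (x - 1) ^ β = x ^ β * (1 + -x⁻¹) ^ β := by
    rw [← mul_rpow hx₀.le (by linarith)]
    congr 1
    field_simp
    ring
  have hpow : x ^ (β - 1) = x ^ β * x⁻¹ := by rw [rpow_sub_one hx₀.ne', div_eq_mul_inv]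
  have hxβ : 0 ≤ x ^ β := rpow_nonneg hx₀.le β
  rw [hfactor, hpow]
  nlinarith [mul_le_mul_of_nonneg_left hbern hxβ]

lemma sum_Icc_rpow_sub_one_le_of_le_one {β : ℝ} (hβ₀ : 0 < β) (hβ₁ : β ≤ 1) (m : ℕ) :
    ∑ j ∈ Icc 1 m, (j : ℝ) ^ (β - 1) ≤ m ^ β / β := by
  induction m with
  | zero => simp [zero_rpow hβ₀.ne']
  | succ m ih =>
    have hstep := mul_rpow_sub_one_le_rpow_sub_rpow hβ₀.le hβ₁ (x := (m : ℝ) + 1) (by simp)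
    rw [add_sub_cancel_right] at hstep
    have hlast : ((m : ℝ) + 1) ^ (β - 1) ≤ (((m : ℝ) + 1) ^ β - m ^ β) / β := by
      rw [le_div_iff₀ hβ₀]
      linarith
    rw [sum_Icc_succ_top (by omega), Nat.cast_succ]
    calc _ ≤ (m : ℝ) ^ β / β + (((m : ℝ) + 1) ^ β - m ^ β) / β := add_le_add ih hlast
      _ = _ := by ring

lemma sum_Icc_rpow_sub_one_le_of_one_le {β : ℝ} (hβ : 1 ≤ β) (m : ℕ) :
    ∑ j ∈ Icc 1 m, (j : ℝ) ^ (β - 1) ≤ m ^ β := by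
  calc ∑ j ∈ Icc 1 m, (j : ℝ) ^ (β - 1)
      ≤ ∑ _j ∈ Icc 1 m, (m : ℝ) ^ (β - 1) := by
        refine sum_le_sum fun j hj => rpow_le_rpow (by positivity) ?_ (by linarith)
        exact_mod_cast (mem_Icc.1 hj).2
    _ = m ^ β := by
        rw [sum_const, Nat.card_Icc, add_tsub_cancel_right, nsmul_eq_mul]
        rcases Nat.eq_zero_or_pos m with rfl | hm
        · simp [zero_rpow (by linarith : β ≠ 0)]
        · rw [← rpow_one_add' (by positivity) (by linarith), add_sub_cancel]

lemma sum_Icc_rpow_sub_one_le {β : ℝ} (hβ : 0 < β) (m : ℕ) :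
    ∑ j ∈ Icc 1 m, (j : ℝ) ^ (β - 1) ≤ (β⁻¹ + 1) * m ^ β := by
  have hmβ : 0 ≤ (m : ℝ) ^ β := by positivity
  rcases le_total β 1 with hβ₁ | hβ₁
  · calc _ ≤ m ^ β / β := sum_Icc_rpow_sub_one_le_of_le_one hβ hβ₁ m
      _ ≤ (β⁻¹ + 1) * m ^ β := by rw [div_eq_inv_mul]; linarith
  · calc _ ≤ (m : ℝ) ^ β := sum_Icc_rpow_sub_one_le_of_one_le hβ₁ m
      _ ≤ (β⁻¹ + 1) * m ^ β := by have := inv_pos.2 hβ; nlinarith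

lemma sum_Icc_reflect {M : Type*} [AddCommMonoid M] (f : ℕ → M) (m : ℕ) :
    ∑ j ∈ Icc 1 m, f (m - j + 1) = ∑ j ∈ Icc 1 m, f j :=
  sum_nbij' (fun j => m - j + 1) (fun j => m - j + 1)
    (fun j hj => by rw [mem_Icc] at *; omega) (fun j hj => by rw [mem_Icc] at *; omega)
    (fun j hj => by rw [mem_Icc] at hj; omega) (fun j hj => by rw [mem_Icc] at hj; omega)
    (fun _ _ => rfl)

lemma rpow_le_of_half_le {γ x M : ℝ} (hM : 0 < M) (hx : M / 2 ≤ x) (hxM : x ≤ M) :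
    x ^ γ ≤ ((2 : ℝ) ^ (-γ) + 1) * M ^ γ := by
  have hx₀ : 0 < x := lt_of_lt_of_le (by positivity) hx
  have h₂ : 0 ≤ (2 : ℝ) ^ (-γ) * M ^ γ := by positivity
  have hMγ : 0 ≤ M ^ γ := by positivity
  rcases le_total γ 0 with hγ | hγ
  · have hhalf : (M / 2) ^ γ = (2 : ℝ) ^ (-γ) * M ^ γ := by
      rw [div_rpow hM.le zero_le_two, rpow_neg zero_le_two, div_eq_inv_mul]
    have := rpow_le_rpow_of_nonpos (by positivity) hx hγ
    linarith
  · have := rpow_le_rpow hx₀.le hxM hγ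
    linarith

lemma rpow_mul_rpow_le_of_le_add {γ δ x y M : ℝ} (hx : 0 ≤ x) (hy : 0 ≤ y) (hxM : x ≤ M)
    (hyM : y ≤ M) (hM : M ≤ x + y) (hM₀ : 0 < M) :
    x ^ γ * y ^ δ ≤
      ((2 : ℝ) ^ (-γ) + 1) * M ^ γ * y ^ δ + ((2 : ℝ) ^ (-δ) + 1) * M ^ δ * x ^ γ := by
  have hxγ : 0 ≤ x ^ γ := rpow_nonneg hx γ
  have hyδ : 0 ≤ y ^ δ := rpow_nonneg hy δ
  rcases le_total (M / 2) x with hx₂ | hy₂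
  · have := mul_le_mul_of_nonneg_right (rpow_le_of_half_le (γ := γ) hM₀ hx₂ hxM) hyδ
    have : 0 ≤ ((2 : ℝ) ^ (-δ) + 1) * M ^ δ * x ^ γ := by positivity
    linarith
  · have := mul_le_mul_of_nonneg_right (rpow_le_of_half_le (γ := δ) hM₀ (by linarith) hyM) hxγ
    have : 0 ≤ ((2 : ℝ) ^ (-γ) + 1) * M ^ γ * y ^ δ := by positivity
    linarith

noncomputable def convolutionConstant (α₁ α₂ : ℝ) : ℝ :=
  ((2 : ℝ) ^ (1 - α₁) + 1) * (α₂⁻¹ + 1) + ((2 : ℝ) ^ (1 - α₂) + 1) * (α₁⁻¹ + 1)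

lemma convolutionConstant_pos {α₁ α₂ : ℝ} (hα₁ : 0 < α₁) (hα₂ : 0 < α₂) :
    0 < convolutionConstant α₁ α₂ := by
  unfold convolutionConstant
  positivity

lemma sum_Icc_rpow_mul_rpow_le {α₁ α₂ : ℝ} (hα₁ : 0 < α₁) (hα₂ : 0 < α₂) {m : ℕ} (hm : 0 < m) :
    ∑ j ∈ Icc 1 m, ((m - j + 1 : ℕ) : ℝ) ^ (α₁ - 1) * (j : ℝ) ^ (α₂ - 1) ≤
      convolutionConstant α₁ α₂ * m ^ (α₁ - 1 + α₂) := by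
  have hM : (0 : ℝ) < m := by exact_mod_cast hm
  set A := ((2 : ℝ) ^ (1 - α₁) + 1) * (m : ℝ) ^ (α₁ - 1)
  set B := ((2 : ℝ) ^ (1 - α₂) + 1) * (m : ℝ) ^ (α₂ - 1)
  have hterm : ∀ j ∈ Icc 1 m, ((m - j + 1 : ℕ) : ℝ) ^ (α₁ - 1) * (j : ℝ) ^ (α₂ - 1) ≤
      A * (j : ℝ) ^ (α₂ - 1) + B * ((m - j + 1 : ℕ) : ℝ) ^ (α₁ - 1) := by
    intro j hj
    rw [mem_Icc] at hj
    have h := rpow_mul_rpow_le_of_le_add (γ := α₁ - 1) (δ := α₂ - 1) (M := m)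
      (Nat.cast_nonneg (m - j + 1)) (Nat.cast_nonneg j)
      (by exact_mod_cast (by omega : m - j + 1 ≤ m)) (by exact_mod_cast hj.2)
      (by norm_cast; omega) hM
    simpa only [neg_sub] using h
  calc _ ≤ ∑ j ∈ Icc 1 m, (A * (j : ℝ) ^ (α₂ - 1) + B * ((m - j + 1 : ℕ) : ℝ) ^ (α₁ - 1)) :=
        sum_le_sum hterm
    _ = A * ∑ j ∈ Icc 1 m, (j : ℝ) ^ (α₂ - 1) + B * ∑ j ∈ Icc 1 m, (j : ℝ) ^ (α₁ - 1) := by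
        rw [sum_add_distrib, ← mul_sum, ← mul_sum, sum_Icc_reflect (fun i => (i : ℝ) ^ (α₁ - 1))]
    _ ≤ A * ((α₂⁻¹ + 1) * m ^ α₂) + B * ((α₁⁻¹ + 1) * m ^ α₁) := by
        gcongr
        · exact sum_Icc_rpow_sub_one_le hα₂ m
        · exact sum_Icc_rpow_sub_one_le hα₁ m
    _ = convolutionConstant α₁ α₂ * m ^ (α₁ - 1 + α₂) := by
        have e₁ : (m : ℝ) ^ (α₁ - 1) * m ^ α₂ = m ^ (α₁ - 1 + α₂) := (rpow_add hM _ _).symm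
        have e₂ : (m : ℝ) ^ (α₂ - 1) * m ^ α₁ = m ^ (α₁ - 1 + α₂) := by
          rw [← rpow_add hM]; ring_nf
        simp only [A, B, convolutionConstant]
        linear_combination ((2 : ℝ) ^ (1 - α₁) + 1) * (α₂⁻¹ + 1) * e₁ +
          ((2 : ℝ) ^ (1 - α₂) + 1) * (α₁⁻¹ + 1) * e₂

end DiscreteConvolution

open DiscreteConvolution in
/-- Discrete convolution estimate (Lemma 3.8, eq. (3.46)): with `t_j = j * Δt`,
`Δt * ∑_{j=1}^m t_{m-j+1}^{-1+α₁} t_j^{-1+α₂} ≤ C t_m^{-1+α₁+α₂}`. -/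
theorem discrete_convolution_estimate :
    ∀ α₁ α₂ : ℝ, 0 < α₁ → 0 < α₂ →
      ∃ C : ℝ, 0 < C ∧
        ∀ Δt : ℝ, 0 < Δt → ∀ m : ℕ, 1 ≤ m →
          Δt * ∑ j ∈ Finset.Icc 1 m,
              (((m - j + 1 : ℕ) : ℝ) * Δt) ^ (-1 + α₁) * ((j : ℝ) * Δt) ^ (-1 + α₂)
            ≤ C * ((m : ℝ) * Δt) ^ (-1 + α₁ + α₂) := by
  intro α₁ α₂ hα₁ hα₂
  refine ⟨convolutionConstant α₁ α₂, convolutionConstant_pos hα₁ hα₂, fun Δt hΔt m hm => ?_⟩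
  simp only [neg_add_eq_sub]
  have hΔt_pow : Δt * (Δt ^ (α₁ - 1) * Δt ^ (α₂ - 1)) = Δt ^ (α₁ - 1 + α₂) := by
    rw [show α₁ - 1 + α₂ = 1 + ((α₁ - 1) + (α₂ - 1)) by ring, rpow_add hΔt, rpow_add hΔt,
      rpow_one]
  have hscale : Δt * ∑ j ∈ Icc 1 m,
      (((m - j + 1 : ℕ) : ℝ) * Δt) ^ (α₁ - 1) * ((j : ℝ) * Δt) ^ (α₂ - 1) =
      Δt ^ (α₁ - 1 + α₂) *
        ∑ j ∈ Icc 1 m, ((m - j + 1 : ℕ) : ℝ) ^ (α₁ - 1) * (j : ℝ) ^ (α₂ - 1) := by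
    rw [← hΔt_pow, mul_sum, mul_sum]
    refine sum_congr rfl fun j _ => ?_
    rw [mul_rpow (by positivity) hΔt.le, mul_rpow (by positivity) hΔt.le]
    ring
  rw [hscale, mul_rpow (by positivity) hΔt.le]
  calc _ ≤ Δt ^ (α₁ - 1 + α₂) * (convolutionConstant α₁ α₂ * m ^ (α₁ - 1 + α₂)) := by
        gcongr
        exact sum_Icc_rpow_mul_rpow_le hα₁ hα₂ hm
    _ = _ := by ring
end

section
/- For all α ∈ [0,1) and α₂ > 0 there exists a constant C = C(α, α₂) > 0, depending only on α and α₂ (in particular independent of Δt and m), such that for every Δt > 0 and every integer m ≥ 1, Δt · Σ_{j=1}^{m} t_{m−j+1}^{−α} · t_j^{−1+α₂} ≤ C · t_m^{−α+α₂}. -/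
/-!
After scaling out `Δt` it suffices to bound `∑_{j=1}^m (m-j+1)^(-α) j^(α₂-1)` by `C m^(α₂-α)`.
Since `(m-j+1) + j > m`, in every term one of the two bases is at least `m/2`, and that factor is
at most twice the same power of `m`. What remains are the power sums `∑_{j ≤ m} j^(p-1) ≲ m^p`
with `p = α₂` and `p = 1 - α`, which for `p ≤ 1` follow by telescoping the tangent-line bound
of the concave function `x ↦ x^p`.
-/

open Finset Real

lemma mul_rpow_sub_one_mul_sub_le_rpow_sub_rpow {p x y : ℝ} (hp0 : 0 ≤ p) (hp1 : p ≤ 1)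
    (hx : 0 < x) (hy : 0 ≤ y) :
    p * x ^ (p - 1) * (x - y) ≤ x ^ p - y ^ p := by
  have hs : -1 ≤ (y - x) / x := by rw [le_div_iff₀ hx]; linarith
  have hbern := rpow_one_add_le_one_add_mul_self hs hp0 hp1
  rw [one_add_div hx.ne', add_sub_cancel, div_rpow hy hx.le, div_le_iff₀ (by positivity)] at hbern
  have hxp : x ^ p = x ^ (p - 1) * x := by rw [rpow_sub_one hx.ne', div_mul_cancel₀ _ hx.ne']
  have : (1 + p * ((y - x) / x)) * x ^ p = x ^ p - p * x ^ (p - 1) * (x - y) := by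
    rw [hxp]; field_simp; ring
  linarith

lemma sum_Icc_rpow_sub_one_le_div {p : ℝ} (hp0 : 0 < p) (hp1 : p ≤ 1) (m : ℕ) :
    ∑ j ∈ Icc 1 m, (j : ℝ) ^ (p - 1) ≤ (m : ℝ) ^ p / p := by
  induction m with
  | zero => simp [zero_rpow hp0.ne']
  | succ n ih =>
    rw [sum_Icc_succ_top (by omega), le_div_iff₀ hp0]
    have hstep := mul_rpow_sub_one_mul_sub_le_rpow_sub_rpow hp0.le hp1 (x := n + 1) (y := n)
      (by positivity) (by positivity)
    rw [le_div_iff₀ hp0] at ih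
    push_cast
    nlinarith

lemma sum_Icc_rpow_sub_one_le_of_one_le {p : ℝ} (hp : 1 ≤ p) (m : ℕ) :
    ∑ j ∈ Icc 1 m, (j : ℝ) ^ (p - 1) ≤ (m : ℝ) ^ p := by
  calc ∑ j ∈ Icc 1 m, (j : ℝ) ^ (p - 1) ≤ #(Icc 1 m) • (m : ℝ) ^ (p - 1) :=
        sum_le_card_nsmul _ _ _ fun j hj ↦
          rpow_le_rpow (Nat.cast_nonneg j) (by exact_mod_cast (mem_Icc.1 hj).2) (by linarith)
    _ = (m : ℝ) ^ p := by
        rw [Nat.card_Icc, add_tsub_cancel_right, nsmul_eq_mul, ← rpow_one_add' (Nat.cast_nonneg m)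
          (by linarith), add_sub_cancel]

lemma sum_Icc_rpow_sub_one_le {p : ℝ} (hp : 0 < p) (m : ℕ) :
    ∑ j ∈ Icc 1 m, (j : ℝ) ^ (p - 1) ≤ (p⁻¹ + 1) * (m : ℝ) ^ p := by
  have hmp : 0 ≤ (m : ℝ) ^ p := by positivity
  rcases le_total p 1 with hp1 | hp1
  · have := sum_Icc_rpow_sub_one_le_div hp hp1 m
    rw [div_eq_inv_mul] at this
    nlinarith [inv_pos.2 hp]
  · have := sum_Icc_rpow_sub_one_le_of_one_le hp1 m
    nlinarith [inv_pos.2 hp]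

lemma rpow_le_two_mul_rpow {b x m : ℝ} (hb : -1 ≤ b) (hx : 0 < x) (hxm : x ≤ m)
    (hmx : m ≤ 2 * x) : x ^ b ≤ 2 * m ^ b := by
  have hm : 0 < m := hx.trans_le hxm
  calc x ^ b = x ^ (b + 1) / x := by rw [← rpow_sub_one hx.ne', add_sub_cancel_right]
    _ ≤ m ^ (b + 1) / (m / 2) := by
        gcongr <;> linarith
    _ = 2 * m ^ b := by rw [rpow_add_one hm.ne']; field_simp

lemma rpow_mul_rpow_le_of_le_add {a b x y m : ℝ} (ha : -1 ≤ a) (hb : -1 ≤ b) (hx : 0 < x)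
    (hy : 0 < y) (hxm : x ≤ m) (hym : y ≤ m) (hm : m ≤ x + y) :
    x ^ a * y ^ b ≤ 2 * (m ^ a * y ^ b + x ^ a * m ^ b) := by
  have hm0 : 0 < m := hx.trans_le hxm
  have hxa : 0 ≤ x ^ a := by positivity
  have hyb : 0 ≤ y ^ b := by positivity
  have hma : 0 ≤ m ^ a := by positivity
  have hmb : 0 ≤ m ^ b := by positivity
  rcases le_total m (2 * x) with hmx | hmx
  · nlinarith [rpow_le_two_mul_rpow ha hx hxm hmx]
  · nlinarith [rpow_le_two_mul_rpow hb hy hym (by linarith)]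

lemma sum_Icc_reflect {M : Type*} [AddCommMonoid M] (f : ℕ → M) (m : ℕ) :
    ∑ j ∈ Icc 1 m, f (m - j + 1) = ∑ j ∈ Icc 1 m, f j := by
  refine sum_nbij' (fun j ↦ m + 1 - j) (fun j ↦ m + 1 - j) ?_ ?_ ?_ ?_ ?_ <;>
    intro j hj <;> simp only [mem_Icc] at hj ⊢
  all_goals first | omega | congr 1; omega

lemma sum_Icc_rpow_mul_rpow_le {α β : ℝ} (hα : α < 1) (hβ : 0 < β) (m : ℕ) :
    ∑ j ∈ Icc 1 m, ((m - j + 1 : ℕ) : ℝ) ^ (-α) * (j : ℝ) ^ (-1 + β)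
      ≤ 2 * ((β⁻¹ + 1) + ((1 - α)⁻¹ + 1)) * (m : ℝ) ^ (-α + β) := by
  rcases Nat.eq_zero_or_pos m with rfl | hm
  · simp only [Icc_eq_empty_of_lt zero_lt_one, sum_empty]
    have : 0 < (1 - α)⁻¹ := inv_pos.2 (by linarith)
    positivity
  have hm0 : (0 : ℝ) < m := by exact_mod_cast hm
  have hterm : ∀ j ∈ Icc 1 m, ((m - j + 1 : ℕ) : ℝ) ^ (-α) * (j : ℝ) ^ (-1 + β)
      ≤ 2 * ((m : ℝ) ^ (-α) * (j : ℝ) ^ (β - 1)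
        + ((m - j + 1 : ℕ) : ℝ) ^ (-α) * (m : ℝ) ^ (β - 1)) := by
    intro j hj
    rw [mem_Icc] at hj
    rw [neg_add_eq_sub]
    apply rpow_mul_rpow_le_of_le_add (by linarith) (by linarith) (by positivity)
    all_goals norm_cast; omega
  calc _ ≤ ∑ j ∈ Icc 1 m, 2 * ((m : ℝ) ^ (-α) * (j : ℝ) ^ (β - 1)
          + ((m - j + 1 : ℕ) : ℝ) ^ (-α) * (m : ℝ) ^ (β - 1)) := sum_le_sum hterm
    _ = 2 * ((m : ℝ) ^ (-α) * ∑ j ∈ Icc 1 m, (j : ℝ) ^ (β - 1)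
          + (m : ℝ) ^ (β - 1) * ∑ j ∈ Icc 1 m, (j : ℝ) ^ ((1 - α) - 1)) := by
        rw [← mul_sum, sum_add_distrib, ← mul_sum, ← sum_mul, sub_sub_cancel_left,
          sum_Icc_reflect (fun i ↦ (i : ℝ) ^ (-α)), mul_comm ((m : ℝ) ^ (β - 1))]
    _ ≤ 2 * ((m : ℝ) ^ (-α) * ((β⁻¹ + 1) * (m : ℝ) ^ β)
          + (m : ℝ) ^ (β - 1) * (((1 - α)⁻¹ + 1) * (m : ℝ) ^ (1 - α))) := by
        gcongr
        · exact sum_Icc_rpow_sub_one_le hβ m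
        · exact sum_Icc_rpow_sub_one_le (by linarith) m
    _ = 2 * ((β⁻¹ + 1) + ((1 - α)⁻¹ + 1)) * (m : ℝ) ^ (-α + β) := by
        have h₁ : (m : ℝ) ^ (-α) * (m : ℝ) ^ β = (m : ℝ) ^ (-α + β) := (rpow_add hm0 _ _).symm
        have h₂ : (m : ℝ) ^ (β - 1) * (m : ℝ) ^ (1 - α) = (m : ℝ) ^ (-α + β) := by
          rw [← rpow_add hm0]; ring_nf
        linear_combination (2 * (β⁻¹ + 1)) * h₁ + (2 * ((1 - α)⁻¹ + 1)) * h₂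

/-- Discrete convolution estimate (Lemma 3.8, eq. (3.47)): with `t_j = j * Δt`,
`Δt * ∑_{j=1}^m t_{m-j+1}^{-α} t_j^{-1+α₂} ≤ C t_m^{-α+α₂}`. -/
theorem discrete_convolution_estimate' :
    ∀ α α₂ : ℝ, 0 ≤ α → α < 1 → 0 < α₂ →
      ∃ C : ℝ, 0 < C ∧
        ∀ Δt : ℝ, 0 < Δt → ∀ m : ℕ, 1 ≤ m →
          Δt * ∑ j ∈ Finset.Icc 1 m,
              (((m - j + 1 : ℕ) : ℝ) * Δt) ^ (-α) * ((j : ℝ) * Δt) ^ (-1 + α₂)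
            ≤ C * ((m : ℝ) * Δt) ^ (-α + α₂) := by
  intro α α₂ _ hα hα₂
  have h1α : 0 < (1 - α)⁻¹ := inv_pos.2 (by linarith)
  refine ⟨2 * ((α₂⁻¹ + 1) + ((1 - α)⁻¹ + 1)), by positivity, fun Δt hΔt m _ ↦ ?_⟩
  have hscale : ∀ j ∈ Icc 1 m,
      (((m - j + 1 : ℕ) : ℝ) * Δt) ^ (-α) * ((j : ℝ) * Δt) ^ (-1 + α₂)
        = Δt ^ (-α) * Δt ^ (-1 + α₂)
          * (((m - j + 1 : ℕ) : ℝ) ^ (-α) * (j : ℝ) ^ (-1 + α₂)) := by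
    intro j _
    rw [mul_rpow (by positivity) hΔt.le, mul_rpow (by positivity) hΔt.le]
    ring
  have hΔpow : Δt * (Δt ^ (-α) * Δt ^ (-1 + α₂)) = Δt ^ (-α + α₂) := by
    rw [← rpow_add hΔt, mul_comm, ← rpow_add_one hΔt.ne']
    ring_nf
  rw [sum_congr rfl hscale, ← mul_sum, ← mul_assoc, hΔpow, mul_rpow (by positivity) hΔt.le]
  calc _ ≤ Δt ^ (-α + α₂)
          * (2 * ((α₂⁻¹ + 1) + ((1 - α)⁻¹ + 1)) * (m : ℝ) ^ (-α + α₂)) := by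
        gcongr
        exact sum_Icc_rpow_mul_rpow_le hα hα₂ m
    _ = _ := by ring
end

section
/- Let 0 ≤ s < T, α ∈ [0,1), and a, b ≥ 0. Let φ : (s, T] → [0, ∞) be continuous with sup_{t ∈ (s,T]} (t−s)^{α} φ(t) < ∞, and suppose that φ(t) ≤ a (t−s)^{−α} + b ∫_s^t φ(τ) dτ for all t ∈ (s, T]. Then φ(t) ≤ a (t−s)^{−α} · (1 + b (T−s) e^{b(T−s)} / (1−α)) for all t ∈ (s, T]. -/
/-!
With `F t = ∫ τ in s..t, φ τ`, the hypothesis reads `F' ≤ a (t-s)^(-α) + b F` with `F s = 0`.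
The function `e^(-b(t-s)) F t - a (t-s)^(1-α) / (1-α)` is continuous on `[s, T]` (the
singular forcing is integrable because `α < 1`) and has nonpositive derivative on `(s, T)`,
so it stays below its value `0` at `s`. Hence `F t ≤ a (t-s)^(1-α) e^(b(t-s)) / (1-α)`, and
substituting this back into the hypothesis gives the bound.
-/

open MeasureTheory Set Real

noncomputable def singularGronwallBound (a b α x : ℝ) : ℝ :=
  a / (1 - α) * x ^ (1 - α) * exp (b * x)

lemma intervalIntegrable_sub_rpow_neg {s α : ℝ} (hα : α < 1) (t : ℝ) :
    IntervalIntegrable (fun τ => (τ - s) ^ (-α)) volume s t := by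
  simpa using (intervalIntegral.intervalIntegrable_rpow' (a := s - s) (b := t - s)
    (r := -α) (by linarith)).comp_sub_right s

lemma integrableOn_Ioc_of_rpow_mul_le {φ : ℝ → ℝ} {s T α M : ℝ} (hα : α < 1)
    (hφ0 : ∀ t ∈ Ioc s T, 0 ≤ φ t) (hφ : ContinuousOn φ (Ioc s T))
    (hM : ∀ t ∈ Ioc s T, (t - s) ^ α * φ t ≤ M) :
    IntegrableOn φ (Ioc s T) := by
  refine ((intervalIntegrable_sub_rpow_neg hα T).const_mul M).1.integrable.mono'
    (hφ.aestronglyMeasurable measurableSet_Ioc) ?_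
  rw [ae_restrict_iff' measurableSet_Ioc]
  refine ae_of_all _ fun t ht => ?_
  have hts : 0 < t - s := sub_pos.2 ht.1
  rw [norm_of_nonneg (hφ0 t ht), rpow_neg hts.le, ← div_eq_mul_inv,
    le_div_iff₀ (rpow_pos_of_pos hts α), mul_comm]
  exact hM t ht

lemma hasDerivAt_integral_of_continuousOn_Ioc {φ : ℝ → ℝ} {s T x : ℝ}
    (hint : IntervalIntegrable φ volume s T) (hφ : ContinuousOn φ (Ioc s T)) (hx : x ∈ Ioo s T) :
    HasDerivAt (fun t => ∫ τ in s..t, φ τ) (φ x) x :=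
  intervalIntegral.integral_hasDerivAt_right
    (hint.mono_set (uIcc_subset_uIcc left_mem_uIcc
      (by rw [uIcc_of_le (hx.1.trans hx.2).le]; exact Ioo_subset_Icc_self hx)))
    ((hφ.mono Ioo_subset_Ioc_self).stronglyMeasurableAtFilter isOpen_Ioo x hx)
    (hφ.continuousAt (Filter.mem_of_superset (Ioo_mem_nhds hx.1 hx.2) Ioo_subset_Ioc_self))

theorem le_singularGronwallBound_of_hasDerivAt_le {F f : ℝ → ℝ} {s T a b α : ℝ} (ha : 0 ≤ a)
    (hb : 0 ≤ b) (hα : α < 1) (hF : ContinuousOn F (Icc s T)) (hFs : F s ≤ 0)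
    (hF' : ∀ x ∈ Ioo s T, HasDerivAt F (f x) x)
    (hf : ∀ x ∈ Ioo s T, f x ≤ a * (x - s) ^ (-α) + b * F x) :
    ∀ t ∈ Icc s T, F t ≤ singularGronwallBound a b α (t - s) := by
  have hβ : 0 < 1 - α := sub_pos.2 hα
  set K : ℝ → ℝ := fun t => exp (-(b * (t - s))) * F t - a / (1 - α) * (t - s) ^ (1 - α)
  have hK' : ∀ x ∈ Ioo s T, HasDerivAt K
      (exp (-(b * (x - s))) * (f x - b * F x) - a * (x - s) ^ (-α)) x := by
    intro x hx
    have hxs : 0 < x - s := sub_pos.2 hx.1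
    have hE : HasDerivAt (fun t => exp (-(b * (t - s)))) (exp (-(b * (x - s))) * -b) x := by
      simpa using ((((hasDerivAt_id x).sub_const s).const_mul b).neg).exp
    have hP : HasDerivAt (fun t => (t - s) ^ (1 - α)) (1 * (1 - α) * (x - s) ^ (1 - α - 1)) x :=
      ((hasDerivAt_id x).sub_const s).rpow_const (Or.inl hxs.ne')
    refine ((hE.mul (hF' x hx)).sub (hP.const_mul (a / (1 - α)))).congr_deriv ?_
    rw [sub_sub_cancel_left]
    field_simp
    ring
  have hK : AntitoneOn K (Icc s T) := by
    refine antitoneOn_of_hasDerivWithinAt_nonpos (convex_Icc s T)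
      (f' := fun x => exp (-(b * (x - s))) * (f x - b * F x) - a * (x - s) ^ (-α)) ?_
      (fun x hx => ?_) (fun x hx => ?_)
    · refine (ContinuousOn.mul (by fun_prop) hF).sub (ContinuousOn.mul continuousOn_const ?_)
      exact fun x _ => (continuousAt_rpow_const _ _ (Or.inr hβ.le)).comp
        (continuousAt_id.sub continuousAt_const) |>.continuousWithinAt
    · rw [interior_Icc] at hx
      exact (hK' x hx).hasDerivWithinAt
    · rw [interior_Icc] at hx
      have hexp : exp (-(b * (x - s))) ≤ 1 :=
        exp_le_one_iff.2 (neg_nonpos.2 (mul_nonneg hb (sub_pos.2 hx.1).le))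
      have hforce : 0 ≤ a * (x - s) ^ (-α) := mul_nonneg ha (rpow_nonneg (sub_pos.2 hx.1).le _)
      calc exp (-(b * (x - s))) * (f x - b * F x) - a * (x - s) ^ (-α)
          ≤ exp (-(b * (x - s))) * (a * (x - s) ^ (-α)) - a * (x - s) ^ (-α) := by
            gcongr
            linarith [hf x hx]
        _ ≤ 0 := by nlinarith
  intro t ht
  have hKt : K t ≤ K s := hK ⟨le_rfl, ht.1.trans ht.2⟩ ht ht.1
  have hFt : F t / exp (b * (t - s)) ≤ a / (1 - α) * (t - s) ^ (1 - α) := by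
    simp only [K, sub_self, mul_zero, exp_zero, zero_rpow hβ.ne', exp_neg,
      ← div_eq_inv_mul] at hKt
    linarith
  rwa [div_le_iff₀ (exp_pos _), ← singularGronwallBound] at hFt

theorem singular_gronwall_general (s T : ℝ) (hsT : s < T)
    (α a b : ℝ) (hα1 : α < 1) (ha : 0 ≤ a) (hb : 0 ≤ b)
    (φ : ℝ → ℝ)
    (hφnonneg : ∀ t ∈ Set.Ioc s T, 0 ≤ φ t)
    (hφcont : ContinuousOn φ (Set.Ioc s T))
    (hφbdd : ∃ M : ℝ, ∀ t ∈ Set.Ioc s T, (t - s) ^ α * φ t ≤ M)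
    (hineq : ∀ t ∈ Set.Ioc s T, φ t ≤ a * (t - s) ^ (-α) + b * ∫ τ in s..t, φ τ) :
    ∀ t ∈ Set.Ioc s T,
      φ t ≤ a * (t - s) ^ (-α) * (1 + b * (T - s) * Real.exp (b * (T - s)) / (1 - α)) := by
  obtain ⟨M, hM⟩ := hφbdd
  have hint : IntervalIntegrable φ volume s T :=
    (intervalIntegrable_iff_integrableOn_Ioc_of_le hsT.le).2
      (integrableOn_Ioc_of_rpow_mul_le hα1 hφnonneg hφcont hM)
  have hF := le_singularGronwallBound_of_hasDerivAt_le ha hb hα1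
    (by simpa [uIcc_of_le hsT.le] using
      intervalIntegral.continuousOn_primitive_interval' hint left_mem_uIcc)
    (by simp) (fun x hx => hasDerivAt_integral_of_continuousOn_Ioc hint hφcont hx)
    (fun x hx => hineq x (Ioo_subset_Ioc_self hx))
  intro t ht
  have hts : 0 < t - s := sub_pos.2 ht.1
  calc φ t ≤ a * (t - s) ^ (-α) + b * singularGronwallBound a b α (t - s) :=
        (hineq t ht).trans (by gcongr; exact hF t (Ioc_subset_Icc_self ht))
    _ = a * (t - s) ^ (-α) * (1 + b * (t - s) * exp (b * (t - s)) / (1 - α)) := by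
        rw [singularGronwallBound, show (1 : ℝ) - α = -α + 1 by ring, rpow_add hts, rpow_one]
        ring
    _ ≤ a * (t - s) ^ (-α) * (1 + b * (T - s) * exp (b * (T - s)) / (1 - α)) := by
        gcongr <;> exact ht.2

/-- Singular Gronwall-type inequality (the continuous Gronwall step applied to (3.41)):
if `φ : (s,T] → [0,∞)` is continuous with `sup_{t ∈ (s,T]} (t−s)^α φ(t) < ∞` and
`φ(t) ≤ a (t−s)^{−α} + b ∫_s^t φ(τ) dτ` on `(s,T]`, then
`φ(t) ≤ a (t−s)^{−α} (1 + b (T−s) e^{b(T−s)} / (1−α))` on `(s,T]`. -/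
theorem singular_gronwall (s T : ℝ) (hs : 0 ≤ s) (hsT : s < T)
    (α a b : ℝ) (hα0 : 0 ≤ α) (hα1 : α < 1) (ha : 0 ≤ a) (hb : 0 ≤ b)
    (φ : ℝ → ℝ)
    (hφnonneg : ∀ t ∈ Set.Ioc s T, 0 ≤ φ t)
    (hφcont : ContinuousOn φ (Set.Ioc s T))
    (hφbdd : ∃ M : ℝ, ∀ t ∈ Set.Ioc s T, (t - s) ^ α * φ t ≤ M)
    (hineq : ∀ t ∈ Set.Ioc s T, φ t ≤ a * (t - s) ^ (-α) + b * ∫ τ in s..t, φ τ) :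
    ∀ t ∈ Set.Ioc s T,
      φ t ≤ a * (t - s) ^ (-α) * (1 + b * (T - s) * Real.exp (b * (T - s)) / (1 - α)) :=
  singular_gronwall_general s T hsT α a b hα1 ha hb φ hφnonneg hφcont hφbdd hineq
end
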